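/- arXiv:2011.14282 — 6 statements merged into one kernel-verified Lean document; each statement's English description precedes it below -/
import Mathlib

section
/- For every integer n ≥ 4, there exists a set E of at most ⌊2n/3⌋ unordered pairs of elements of Fin n such that the derivation closure Cl(T_E) contains every ordered triple (a,b,c) of pairwise distinct elements of Fin n with cyc(a,b,c). (That is, n points in convex position admit an OT-graph with at most ⌊2n/3⌋ edges.) -/
/-- Convex cyclic (counterclockwise) orientation on `Fin n`:
`cyc a b c` iff `a < b < c` or `b < c < a` or `c < a < b`. -/
def cyc {n : ℕ} (a b c : Fin n) : Prop :=
  (a.val < b.val ∧ b.val < c.val) ∨ (b.val < c.val ∧ c.val < a.val) ∨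
    (c.val < a.val ∧ a.val < b.val)

/-- The set `T_E` of ordered triples of pairwise distinct elements of `Fin n`
with counterclockwise orientation `cyc` such that at least one of the three
pairs is an edge of `E`. -/
def TE {n : ℕ} (E : Finset (Sym2 (Fin n))) : Set (Fin n × Fin n × Fin n) :=
  {t | t.1 ≠ t.2.1 ∧ t.2.1 ≠ t.2.2 ∧ t.1 ≠ t.2.2 ∧ cyc t.1 t.2.1 t.2.2 ∧
    (s(t.1, t.2.1) ∈ E ∨ s(t.2.1, t.2.2) ∈ E ∨ s(t.1, t.2.2) ∈ E)}

/-- The derivation closure `Cl T` of a set `T` of ordered triples: the smallest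
set of ordered triples containing `T` and closed under Knuth's rules
Ax1 (cyclic symmetry), Ax4 (interiority), Ax5 (transitivity) and
Ax5' (dual transitivity). -/
inductive Cl {α : Type*} (T : Set (α × α × α)) : α → α → α → Prop
  | base {p q r : α} : (p, q, r) ∈ T → Cl T p q r
  | ax1 {p q r : α} : Cl T p q r → Cl T q r p
  | ax4 {p q r t : α} : Cl T t q r → Cl T p t r → Cl T p q t → Cl T p q r
  | ax5 {p q r s t : α} : Cl T t s p → Cl T t s q → Cl T t s r →
      Cl T t p q → Cl T t q r → Cl T t p r
  | ax5' {p q r s t : α} : Cl T s t p → Cl T s t q → Cl T s t r →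
      Cl T t p q → Cl T t q r → Cl T t p r

namespace OTaux

section Abstract

variable {α : Type*} {T : Set (α × α × α)}

/-- Fan lemma: guarded transitivity around an anchor `t`. -/
lemma fan (t g : α) (d : ℕ → α) (r : ℕ)
    (hG : ∀ i, i < r → Cl T g t (d i))
    (hS : ∀ i, i + 1 < r → Cl T t (d i) (d (i + 1))) :
    ∀ i j, i < j → j < r → Cl T t (d i) (d j) := by
  intro i j
  induction j with
  | zero => omega
  | succ j ih =>
    intro hij hjr
    rcases Nat.lt_or_ge i j with hij' | hij'
    · exact Cl.ax5' (hG i (by omega)) (hG j (by omega)) (hG (j + 1) (by omega))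
        (ih hij' (by omega)) (hS j hjr)
    · have : i = j := by omega
      subst this
      exact hS i hjr

/-- Peel lemma: if all triples among `l 0, …, l (m-1)` are derived, plus three
special triples involving a new point `x` (located circularly just before `l 0`),
then all triples involving `x` are derived. -/
lemma peel (x : α) (l : ℕ → α) (m : ℕ) (hm : 4 ≤ m)
    (Hp : ∀ i j k, i < j → j < k → k < m → Cl T (l i) (l j) (l k))
    (F1 : Cl T (l (m - 2)) (l (m - 1)) x)
    (F2 : Cl T (l (m - 1)) x (l 0))
    (F3 : Cl T (l 0) (l 1) x) :
    ∀ i j, i < j → j < m → Cl T x (l i) (l j) := by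
  -- L j : Cl T (l (m-1)) x (l j) for j < m-1
  have L : ∀ j, j < m - 1 → Cl T (l (m - 1)) x (l j) := by
    intro j
    induction j with
    | zero => exact fun _ => F2
    | succ j ih =>
      intro hj
      by_cases hj2 : j + 1 = m - 2
      · rw [hj2]; exact F1.ax1
      · exact Cl.ax5' F1 ((Hp j (m - 2) (m - 1) (by omega) (by omega) (by omega)).ax1)
          ((Hp (j + 1) (m - 2) (m - 1) (by omega) (by omega) (by omega)).ax1)
          (ih (by omega))
          ((Hp j (j + 1) (m - 1) (by omega) (by omega) (by omega)).ax1.ax1)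
  -- S u : Cl T (l u) (l (u+1)) x for u+1 < m
  have S : ∀ u, u + 1 < m → Cl T (l u) (l (u + 1)) x := by
    intro u
    induction u with
    | zero => exact fun _ => F3
    | succ u ih =>
      intro hu
      by_cases h2 : u + 2 = m - 1
      · have h3 : u + 1 = m - 2 := by omega
        rw [h2, h3]; exact F1
      · exact Cl.ax5' (Hp u (u + 1) (u + 2) (by omega) (by omega) (by omega))
          (Hp u (u + 1) (m - 1) (by omega) (by omega) (by omega))
          (ih (by omega))
          (Hp (u + 1) (u + 2) (m - 1) (by omega) (by omega) (by omega))
          ((L (u + 1) (by omega)).ax1.ax1)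
  -- G u v : Cl T (l u) (l v) x  for u < v < m
  have G : ∀ u v, u < v → v < m → Cl T (l u) (l v) x := by
    intro u v huv hvm
    by_cases hv1 : v = m - 1
    · rw [hv1]; exact (L u (by omega)).ax1.ax1
    · by_cases hv2 : v = u + 1
      · rw [hv2]; exact S u (by omega)
      · exact Cl.ax5 (Hp u (u + 1) v (by omega) (by omega) (by omega))
          (Hp u (u + 1) (m - 1) (by omega) (by omega) (by omega))
          (S u (by omega))
          (Hp u v (m - 1) (by omega) (by omega) (by omega))
          ((L u (by omega)).ax1.ax1)
  intro i j hij hjm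
  exact (G i j hij hjm).ax1.ax1

end Abstract


/-- number of skipped vertices -/
def sk (n : ℕ) : ℕ := if n % 3 = 1 then n / 3 - 1 else n / 3

/-- number of kept vertices -/
def MM (n : ℕ) : ℕ := n - sk n

/-- the i-th kept vertex (as a natural number) -/
def cnat (n i : ℕ) : ℕ := if i < 2 * sk n + 2 then 3 * (i / 2) + i % 2 else i + sk n

lemma sk_def {n : ℕ} (hn : 4 ≤ n) :
    (n % 3 = 0 ∧ n = 3 * sk n ∧ MM n = 2 * sk n ∧ 2 ≤ sk n) ∨
    (n % 3 = 1 ∧ n = 3 * sk n + 4 ∧ MM n = 2 * sk n + 4) ∨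
    (n % 3 = 2 ∧ n = 3 * sk n + 2 ∧ MM n = 2 * sk n + 2 ∧ 1 ≤ sk n) := by
  unfold MM sk
  have h3 : n % 3 < 3 := Nat.mod_lt _ (by omega)
  interval_cases h : n % 3 <;> simp [h] <;> omega

lemma MM_ge {n : ℕ} (hn : 4 ≤ n) : 4 ≤ MM n := by
  rcases sk_def hn with ⟨_, h1, h2, h3⟩ | ⟨_, h1, h2⟩ | ⟨_, h1, h2, h3⟩ <;> omega

lemma cnat_lt {n : ℕ} (hn : 4 ≤ n) {i : ℕ} (h : i < MM n) : cnat n i < n := by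
  unfold cnat
  rcases sk_def hn with ⟨_, h1, h2, h3⟩ | ⟨_, h1, h2⟩ | ⟨_, h1, h2, h3⟩ <;>
    split_ifs <;> omega

lemma cnat_mono {n : ℕ} (hn : 4 ≤ n) {i j : ℕ} (hij : i < j) (hj : j < MM n) :
    cnat n i < cnat n j := by
  unfold cnat
  rcases sk_def hn with ⟨_, h1, h2, h3⟩ | ⟨_, h1, h2⟩ | ⟨_, h1, h2, h3⟩ <;>
    split_ifs <;> omega

/-- the i-th kept vertex as an element of `Fin n` -/
def cF (n : ℕ) (hn : 4 ≤ n) (i : ℕ) : Fin n :=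
  ⟨cnat n i % n, Nat.mod_lt _ (by omega)⟩

lemma cval {n : ℕ} (hn : 4 ≤ n) {i : ℕ} (h : i < MM n) :
    (cF n hn i).val = cnat n i := Nat.mod_eq_of_lt (cnat_lt hn h)

/-- index set for the edges -/
def idxE (n : ℕ) : Finset ℕ :=
  if n % 3 = 0 then Finset.range (MM n)
  else if n % 3 = 1 then (Finset.range (MM n - 1)).erase (MM n - 3)
  else Finset.range (MM n - 1)

/-- The edge set: consecutive pairs of kept vertices (cyclically for n ≡ 0,
with appropriate pairs omitted otherwise). -/
def Ed (n : ℕ) (hn : 4 ≤ n) : Finset (Sym2 (Fin n)) :=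
  (idxE n).image (fun i => s(cF n hn i, cF n hn ((i + 1) % MM n)))

lemma Ed_card {n : ℕ} (hn : 4 ≤ n) : (Ed n hn).card ≤ 2 * n / 3 := by
  have h := Finset.card_image_le (s := idxE n)
    (f := fun i => s(cF n hn i, cF n hn ((i + 1) % MM n)))
  refine le_trans h ?_
  unfold idxE
  rcases sk_def hn with ⟨h0, h1, h2, h3⟩ | ⟨h0, h1, h2⟩ | ⟨h0, h1, h2, h3⟩
  · rw [if_pos h0, Finset.card_range]; omega
  · rw [if_neg (by omega), if_pos h0, Finset.card_erase_of_mem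
      (Finset.mem_range.mpr (by omega)), Finset.card_range]
    omega
  · rw [if_neg (by omega), if_neg (by omega), Finset.card_range]; omega

lemma mem_Ed {n : ℕ} (hn : 4 ≤ n) {i : ℕ} (h1 : i + 1 < MM n)
    (h2 : n % 3 = 1 → i ≠ MM n - 3) :
    s(cF n hn i, cF n hn (i + 1)) ∈ Ed n hn := by
  refine Finset.mem_image.mpr ⟨i, ?_, ?_⟩
  · unfold idxE
    split_ifs with ha hb
    · exact Finset.mem_range.mpr (by omega)
    · exact Finset.mem_erase.mpr ⟨h2 hb, Finset.mem_range.mpr (by omega)⟩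
    · exact Finset.mem_range.mpr (by omega)
  · rw [Nat.mod_eq_of_lt h1]

lemma wrap_mem {n : ℕ} (hn : 4 ≤ n) (h0 : n % 3 = 0) :
    s(cF n hn (MM n - 1), cF n hn 0) ∈ Ed n hn := by
  have hM := MM_ge hn
  refine Finset.mem_image.mpr ⟨MM n - 1, ?_, ?_⟩
  · unfold idxE
    rw [if_pos h0]
    exact Finset.mem_range.mpr (by omega)
  · have : MM n - 1 + 1 = MM n := by omega
    rw [this, Nat.mod_self]

lemma cyc_rot {n : ℕ} {a b c : Fin n} (h : cyc a b c) : cyc b c a := by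
  unfold cyc at *; omega

lemma cyc_asym {n : ℕ} {a b c : Fin n} (h : cyc a b c) (h' : cyc a c b) : False := by
  unfold cyc at *; omega

lemma cyc_ne {n : ℕ} {a b c : Fin n} (h : cyc a b c) : a ≠ b ∧ b ≠ c ∧ a ≠ c := by
  refine ⟨fun e => ?_, fun e => ?_, fun e => ?_⟩ <;>
    (subst e; unfold cyc at h; omega)

lemma cyc_inc {n : ℕ} (hn : 4 ≤ n) {i j k : ℕ} (hij : i < j) (hjk : j < k)
    (hk : k < MM n) : cyc (cF n hn i) (cF n hn j) (cF n hn k) :=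
  Or.inl ⟨by rw [cval hn (by omega), cval hn (by omega)]; exact cnat_mono hn hij (by omega),
    by rw [cval hn (by omega), cval hn hk]; exact cnat_mono hn hjk hk⟩


section Concrete

variable {n : ℕ} (hn : 4 ≤ n)

lemma baseCl {a b c : Fin n} (h : cyc a b c)
    (he : s(a, b) ∈ Ed n hn ∨ s(b, c) ∈ Ed n hn ∨ s(a, c) ∈ Ed n hn) :
    Cl (TE (Ed n hn)) a b c :=
  Cl.base ⟨(cyc_ne h).1, (cyc_ne h).2.1, (cyc_ne h).2.2, h, he⟩

lemma hEtop : s(cF n hn (MM n - 2), cF n hn (MM n - 1)) ∈ Ed n hn := by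
  have hM := MM_ge hn
  have e1 : MM n - 2 + 1 = MM n - 1 := by omega
  have := mem_Ed hn (i := MM n - 2) (by omega) (fun _ => by omega)
  rwa [e1] at this

/-- V2 chain : triples for the pair (c (M-1), c 0). -/
lemma V2 : ∀ w, 1 ≤ w → w ≤ MM n - 2 →
    Cl (TE (Ed n hn)) (cF n hn (MM n - 1)) (cF n hn 0) (cF n hn w) := by
  have hM := MM_ge hn
  intro w
  induction w with
  | zero => omega
  | succ w ih =>
    intro _ hw
    rcases Nat.eq_or_lt_of_le hw with he | hlt
    · -- w + 1 = M - 2 : special base triple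
      rw [he]
      refine baseCl hn ?_ (Or.inr (Or.inr ?_))
      · exact cyc_rot (cyc_rot (cyc_inc hn (by omega) (by omega) (by omega)))
      · rw [Sym2.eq_swap]; exact hEtop hn
    · -- w + 1 ≤ M - 3
      rcases Nat.eq_zero_or_pos w with rfl | hw0
      · -- w + 1 = 1 : base of chain
        refine baseCl hn ?_ (Or.inr (Or.inl (mem_Ed hn (by omega) (fun _ => by omega))))
        exact cyc_rot (cyc_rot (cyc_inc hn (by omega) (by omega) (by omega)))
      · refine Cl.ax5' (s := cF n hn (MM n - 2)) ?_ ?_ ?_ (ih hw0 (by omega)) ?_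
        · exact baseCl hn (cyc_rot (cyc_inc hn (by omega) (by omega) (by omega)))
            (Or.inl (hEtop hn))
        · exact baseCl hn (cyc_rot (cyc_inc hn (by omega) (by omega) (by omega)))
            (Or.inl (hEtop hn))
        · exact baseCl hn (cyc_rot (cyc_inc hn (by omega) (by omega) (by omega)))
            (Or.inl (hEtop hn))
        · exact baseCl hn (cyc_rot (cyc_rot (cyc_inc hn (by omega) (by omega) (by omega))))
            (Or.inr (Or.inl (mem_Ed hn (by omega) (fun _ => by omega))))

/-- V1 chain (only needed when n % 3 = 1) : triples for the pair (c (M-3), c (M-2)). -/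
lemma V1 (h1 : n % 3 = 1) : ∀ w, w < MM n → w ≠ MM n - 3 → w ≠ MM n - 2 →
    Cl (TE (Ed n hn)) (cF n hn (MM n - 3)) (cF n hn (MM n - 2)) (cF n hn w) := by
  have hM := MM_ge hn
  have eM2 : MM n - 3 + 1 = MM n - 2 := by omega
  have eM3 : MM n - 4 + 1 = MM n - 3 := by omega
  have hEm4 : s(cF n hn (MM n - 4), cF n hn (MM n - 3)) ∈ Ed n hn := by
    have := mem_Ed hn (i := MM n - 4) (by omega) (fun _ => by omega)
    rwa [eM3] at this
  -- X0 : the base triple (c (M-3), c (M-2), c (M-1))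
  have X0 : Cl (TE (Ed n hn)) (cF n hn (MM n - 3)) (cF n hn (MM n - 2)) (cF n hn (MM n - 1)) := by
    refine baseCl hn (cyc_inc hn (by omega) (by omega) (by omega))
      (Or.inr (Or.inl (hEtop hn)))
  -- chain : w ≤ M - 5
  have chain : ∀ w, w + 5 ≤ MM n →
      Cl (TE (Ed n hn)) (cF n hn (MM n - 3)) (cF n hn (MM n - 2)) (cF n hn w) := by
    intro w
    induction w with
    | zero =>
      intro hw
      refine Cl.ax5' (s := cF n hn (MM n - 4)) (q := cF n hn (MM n - 1)) ?_ ?_ ?_ X0 ?_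
      · exact baseCl hn (cyc_inc hn (by omega) (by omega) (by omega)) (Or.inl hEm4)
      · exact baseCl hn (cyc_inc hn (by omega) (by omega) (by omega)) (Or.inl hEm4)
      · exact baseCl hn (cyc_rot (cyc_inc hn (by omega) (by omega) (by omega)))
          (Or.inl hEm4)
      · exact (V2 hn (MM n - 3) (by omega) (by omega)).ax1.ax1
    | succ w ih =>
      intro hw
      refine Cl.ax5' (s := cF n hn (MM n - 4)) (q := cF n hn w) ?_ ?_ ?_ (ih (by omega)) ?_
      · exact baseCl hn (cyc_inc hn (by omega) (by omega) (by omega)) (Or.inl hEm4)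
      · exact baseCl hn (cyc_rot (cyc_inc hn (by omega) (by omega) (by omega)))
          (Or.inl hEm4)
      · exact baseCl hn (cyc_rot (cyc_inc hn (by omega) (by omega) (by omega)))
          (Or.inl hEm4)
      · exact baseCl hn (cyc_rot (cyc_rot (cyc_inc hn (by omega) (by omega) (by omega))))
          (Or.inr (Or.inl (mem_Ed hn (by omega) (fun _ => by omega))))
  intro w hwM hw3 hw2
  by_cases hw1 : w = MM n - 1
  · rw [hw1]; exact X0
  · by_cases hw4 : w = MM n - 4
    · rw [hw4]
      refine baseCl hn (cyc_rot (cyc_inc hn (by omega) (by omega) (by omega)))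
        (Or.inr (Or.inr ?_))
      rw [Sym2.eq_swap]; exact hEm4
    · exact chain w (by omega)

lemma HEa : ∀ u w, u + 1 < MM n → u + 1 < w → w < MM n →
    Cl (TE (Ed n hn)) (cF n hn u) (cF n hn (u + 1)) (cF n hn w) := by
  have hM := MM_ge hn
  intro u w hu huw hw
  by_cases h : n % 3 = 1 ∧ u = MM n - 3
  · obtain ⟨h1, rfl⟩ := h
    have eM2 : MM n - 3 + 1 = MM n - 2 := by omega
    rw [eM2]
    exact V1 hn h1 w hw (by omega) (by omega)
  · exact baseCl hn (cyc_inc hn (by omega) huw hw)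
      (Or.inl (mem_Ed hn hu (fun hm he => h ⟨hm, he⟩)))

lemma HEb : ∀ u w, u + 1 < MM n → w < u →
    Cl (TE (Ed n hn)) (cF n hn w) (cF n hn u) (cF n hn (u + 1)) := by
  have hM := MM_ge hn
  intro u w hu hwu
  by_cases h : n % 3 = 1 ∧ u = MM n - 3
  · obtain ⟨h1, rfl⟩ := h
    have eM2 : MM n - 3 + 1 = MM n - 2 := by omega
    rw [eM2]
    exact (V1 hn h1 w (by omega) (by omega) (by omega)).ax1.ax1
  · exact baseCl hn (cyc_inc hn hwu (by omega) hu)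
      (Or.inr (Or.inl (mem_Ed hn hu (fun hm he => h ⟨hm, he⟩))))

lemma HE2 : ∀ w, 0 < w → w < MM n - 1 →
    Cl (TE (Ed n hn)) (cF n hn 0) (cF n hn w) (cF n hn (MM n - 1)) := by
  have hM := MM_ge hn
  intro w hw0 hwM
  by_cases h : n % 3 = 0
  · refine baseCl hn (cyc_inc hn hw0 hwM (by omega)) (Or.inr (Or.inr ?_))
    rw [Sym2.eq_swap]; exact wrap_mem hn h
  · exact (V2 hn w hw0 (by omega)).ax1

/-- all triples among the kept vertices -/
lemma CY : ∀ i j k, i < j → j < k → k < MM n →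
    Cl (TE (Ed n hn)) (cF n hn i) (cF n hn j) (cF n hn k) := by
  have hM := MM_ge hn
  intro i j k hij hjk hkM
  rcases Nat.eq_zero_or_pos i with rfl | hi0
  · by_cases hk : k = MM n - 1
    · rw [hk]; exact HE2 hn j hij (by omega)
    · have main := fan (T := TE (Ed n hn)) (cF n hn 0) (cF n hn (MM n - 1))
        (fun a => cF n hn (a + 1)) (MM n - 2)
        (fun a ha => (HE2 hn (a + 1) (by omega) (by omega)).ax1.ax1)
        (fun a ha => HEb hn (a + 1) 0 (by omega) (by omega))
      have := main (j - 1) (k - 1) (by omega) (by omega)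
      simp only [show j - 1 + 1 = j from by omega, show k - 1 + 1 = k from by omega] at this
      exact this
  · have main := fan (T := TE (Ed n hn)) (cF n hn i) (cF n hn (i - 1))
      (fun a => cF n hn (i + 1 + a)) (MM n - 1 - i)
      (fun a ha => by
        have := HEa hn (i - 1) (i + 1 + a) (by omega) (by omega) (by omega)
        rwa [show i - 1 + 1 = i from by omega] at this)
      (fun a ha => by
        have := HEb hn (i + 1 + a) i (by omega) (by omega)
        rwa [show i + 1 + a + 1 = i + 1 + (a + 1) from by omega] at this)
    have := main (j - i - 1) (k - i - 1) (by omega) (by omega)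
    simp only [show i + 1 + (j - i - 1) = j from by omega,
      show i + 1 + (k - i - 1) = k from by omega] at this
    exact this

end Concrete

/-- index of a kept vertex -/
def cidx (n y : ℕ) : ℕ := if y < 3 * sk n + 2 then y - (y + 1) / 3 else y - sk n

lemma cidx_spec {n : ℕ} (hn : 4 ≤ n) {y : ℕ} (hy : y < n)
    (hk : y % 3 = 2 → 3 * sk n + 2 ≤ y) :
    cidx n y < MM n ∧ cnat n (cidx n y) = y := by
  unfold cidx cnat
  rcases sk_def hn with ⟨h0, h1, h2, h3⟩ | ⟨h0, h1, h2⟩ | ⟨h0, h1, h2, h3⟩ <;>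
    split_ifs <;> omega

lemma idx_lt {n : ℕ} (hn : 4 ≤ n) {i j : ℕ} (h : cnat n i < cnat n j)
    (hi : i < MM n) (hj : j < MM n) : i < j := by
  rcases lt_trichotomy i j with h' | rfl | h'
  · exact h'
  · omega
  · exact absurd (cnat_mono hn h' hi) (by omega)

lemma c_surj {n : ℕ} (hn : 4 ≤ n) (y : Fin n) (hk : y.val % 3 = 2 → 3 * sk n + 2 ≤ y.val) :
    ∃ i, i < MM n ∧ cF n hn i = y := by
  obtain ⟨h1, h2⟩ := cidx_spec hn y.isLt hk
  exact ⟨cidx n y.val, h1, Fin.ext (by rw [cval hn h1]; exact h2)⟩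

/-- derivability of all triples among vertices present at stage `j` -/
def Der (n : ℕ) (hn : 4 ≤ n) (j : ℕ) : Prop :=
  ∀ a b c : Fin n, (a.val % 3 = 2 → 3 * j + 2 ≤ a.val) →
    (b.val % 3 = 2 → 3 * j + 2 ≤ b.val) → (c.val % 3 = 2 → 3 * j + 2 ≤ c.val) →
    cyc a b c → Cl (TE (Ed n hn)) a b c

lemma Der_top {n : ℕ} (hn : 4 ≤ n) : Der n hn (sk n) := by
  intro a b c ha hb hc hcyc
  obtain ⟨ia, hia, rfl⟩ := c_surj hn a ha
  obtain ⟨ib, hib, rfl⟩ := c_surj hn b hb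
  obtain ⟨ic, hic, rfl⟩ := c_surj hn c hc
  have va := cval hn hia
  have vb := cval hn hib
  have vc := cval hn hic
  rcases hcyc with ⟨h1, h2⟩ | ⟨h1, h2⟩ | ⟨h1, h2⟩
  · rw [va, vb] at h1; rw [vb, vc] at h2
    exact CY hn ia ib ic (idx_lt hn h1 hia hib) (idx_lt hn h2 hib hic) hic
  · rw [vb, vc] at h1; rw [vc, va] at h2
    exact (CY hn ib ic ia (idx_lt hn h1 hib hic) (idx_lt hn h2 hic hia) hia).ax1.ax1
  · rw [vc, va] at h1; rw [va, vb] at h2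
    exact (CY hn ic ia ib (idx_lt hn h1 hic hia) (idx_lt hn h2 hia hib) hib).ax1

/-- length of the enumeration at stage `j` -/
def mP (n j : ℕ) : ℕ := n - j - 1

/-- enumeration (as naturals) of the vertices other than `3j+2` present at stage `j+1`,
in circular order starting just after `3j+2`. -/
def lnat (n j i : ℕ) : ℕ :=
  if i < n - (3 * j + 3) then 3 * j + 3 + i
  else 3 * ((i - (n - (3 * j + 3))) / 2) + (i - (n - (3 * j + 3))) % 2

lemma lnat_lt {n : ℕ} (hn : 4 ≤ n) {j i : ℕ} (hj : j < sk n) (hi : i < mP n j) :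
    lnat n j i < n := by
  unfold lnat mP at *
  rcases sk_def hn with ⟨h0, h1, h2, h3⟩ | ⟨h0, h1, h2⟩ | ⟨h0, h1, h2, h3⟩ <;>
    split_ifs <;> omega

def lF (n : ℕ) (hn : 4 ≤ n) (j i : ℕ) : Fin n := ⟨lnat n j i % n, Nat.mod_lt _ (by omega)⟩

lemma lval {n : ℕ} (hn : 4 ≤ n) {j i : ℕ} (hj : j < sk n) (hi : i < mP n j) :
    (lF n hn j i).val = lnat n j i := Nat.mod_eq_of_lt (lnat_lt hn hj hi)

def xF (n : ℕ) (hn : 4 ≤ n) (j : ℕ) : Fin n := ⟨(3 * j + 2) % n, Nat.mod_lt _ (by omega)⟩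

lemma xval {n : ℕ} (hn : 4 ≤ n) {j : ℕ} (hj : j < sk n) : (xF n hn j).val = 3 * j + 2 := by
  refine Nat.mod_eq_of_lt ?_
  rcases sk_def hn with ⟨h0, h1, h2, h3⟩ | ⟨h0, h1, h2⟩ | ⟨h0, h1, h2, h3⟩ <;> omega

/-- index of a vertex at stage `j` -/
def lidx (n j y : ℕ) : ℕ :=
  if 3 * j + 2 < y then y - (3 * j + 3) else (n - (3 * j + 3)) + (y - (y + 1) / 3)

lemma lidx_spec {n : ℕ} (hn : 4 ≤ n) {j y : ℕ} (hj : j < sk n) (hy : y < n)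
    (hne : y ≠ 3 * j + 2) (hk : y % 3 = 2 → 3 * j + 2 ≤ y) :
    lidx n j y < mP n j ∧ lnat n j (lidx n j y) = y := by
  unfold lidx lnat mP
  rcases sk_def hn with ⟨h0, h1, h2, h3⟩ | ⟨h0, h1, h2⟩ | ⟨h0, h1, h2, h3⟩ <;>
    split_ifs <;> omega

lemma l_surj {n : ℕ} (hn : 4 ≤ n) {j : ℕ} (hj : j < sk n) (y : Fin n)
    (hk : y.val % 3 = 2 → 3 * j + 2 ≤ y.val) (hne : y ≠ xF n hn j) :
    ∃ i, i < mP n j ∧ lF n hn j i = y := by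
  have hne' : y.val ≠ 3 * j + 2 := by
    intro h
    exact hne (Fin.ext (by rw [xval hn hj]; exact h))
  obtain ⟨h1, h2⟩ := lidx_spec hn hj y.isLt hne' hk
  exact ⟨lidx n j y.val, h1, Fin.ext (by rw [lval hn hj h1]; exact h2)⟩

lemma cyc_lF {n : ℕ} (hn : 4 ≤ n) {j i k : ℕ} (hj : j < sk n) (hik : i < k)
    (hk : k < mP n j) : cyc (xF n hn j) (lF n hn j i) (lF n hn j k) := by
  unfold cyc
  rw [xval hn hj, lval hn hj (by omega), lval hn hj hk]
  unfold lnat mP at *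
  rcases sk_def hn with ⟨h0, h1, h2, h3⟩ | ⟨h0, h1, h2⟩ | ⟨h0, h1, h2, h3⟩ <;>
    split_ifs <;> omega

lemma lF_eq_cF {n : ℕ} (hn : 4 ≤ n) {j i i' : ℕ} (hj : j < sk n) (hi : i < mP n j)
    (hi' : i' < MM n) (h : lnat n j i = cnat n i') : lF n hn j i = cF n hn i' :=
  Fin.ext (by rw [lval hn hj hi, cval hn hi']; exact h)

set_option maxHeartbeats 2000000 in
lemma Der_step {n : ℕ} (hn : 4 ≤ n) {j : ℕ} (hj : j < sk n) (prev : Der n hn (j + 1)) :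
    Der n hn j := by
  have hM := MM_ge hn
  have hsk := sk_def hn
  have hm4 : 4 ≤ mP n j := by
    unfold mP
    rcases hsk with ⟨h0, h1, h2, h3⟩ | ⟨h0, h1, h2⟩ | ⟨h0, h1, h2, h3⟩ <;> omega
  -- all triples among the stage-(j+1) vertices, via `prev`
  have Hp : ∀ i k l, i < k → k < l → l < mP n j →
      Cl (TE (Ed n hn)) (lF n hn j i) (lF n hn j k) (lF n hn j l) := by
    intro i k l h1 h2 h3
    have vi := lval hn hj (show i < mP n j by omega)
    have vk := lval hn hj (show k < mP n j by omega)
    have vl := lval hn hj h3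
    refine prev _ _ _ ?_ ?_ ?_ ?_
    · rw [vi]; unfold lnat; split_ifs <;> omega
    · rw [vk]; unfold lnat; split_ifs <;> omega
    · rw [vl]; unfold lnat; split_ifs <;> omega
    · unfold cyc
      rw [vi, vk, vl]
      simp only [mP] at h3
      simp only [lnat]
      rcases hsk with ⟨h0, h1', h2', h3'⟩ | ⟨h0, h1', h2'⟩ | ⟨h0, h1', h2', h3'⟩ <;>
        split_ifs <;> omega
  have cycF1 : cyc (lF n hn j (mP n j - 2)) (lF n hn j (mP n j - 1)) (xF n hn j) := by
    unfold cyc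
    rw [lval hn hj (by omega), lval hn hj (by omega), xval hn hj]
    unfold mP lnat
    rcases hsk with ⟨h0, h1, h2, h3⟩ | ⟨h0, h1, h2⟩ | ⟨h0, h1, h2, h3⟩ <;>
      split_ifs <;> omega
  have F1 : Cl (TE (Ed n hn)) (lF n hn j (mP n j - 2)) (lF n hn j (mP n j - 1)) (xF n hn j) := by
    have hi' : 2 * j + 1 < MM n := by
      rcases hsk with ⟨h0, h1, h2, h3⟩ | ⟨h0, h1, h2⟩ | ⟨h0, h1, h2, h3⟩ <;> omega
    have e1 : lF n hn j (mP n j - 2) = cF n hn (2 * j) :=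
      lF_eq_cF hn hj (by omega) (by omega)
        (by unfold mP lnat cnat;
            rcases hsk with ⟨h0, h1, h2, h3⟩ | ⟨h0, h1, h2⟩ | ⟨h0, h1, h2, h3⟩ <;>
              split_ifs <;> omega)
    have e2 : lF n hn j (mP n j - 1) = cF n hn (2 * j + 1) :=
      lF_eq_cF hn hj (by omega) hi'
        (by unfold mP lnat cnat;
            rcases hsk with ⟨h0, h1, h2, h3⟩ | ⟨h0, h1, h2⟩ | ⟨h0, h1, h2, h3⟩ <;>
              split_ifs <;> omega)
    refine baseCl hn cycF1 (Or.inl ?_)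
    rw [e1, e2]
    exact mem_Ed hn hi' (fun hm => by
      rcases hsk with ⟨h0, h1, h2, h3⟩ | ⟨h0, h1, h2⟩ | ⟨h0, h1, h2, h3⟩ <;> omega)
  have cycF2 : cyc (lF n hn j (mP n j - 1)) (xF n hn j) (lF n hn j 0) := by
    unfold cyc
    rw [lval hn hj (by omega), lval hn hj (by omega), xval hn hj]
    unfold mP lnat
    rcases hsk with ⟨h0, h1, h2, h3⟩ | ⟨h0, h1, h2⟩ | ⟨h0, h1, h2, h3⟩ <;>
      split_ifs <;> omega
  have F2 : Cl (TE (Ed n hn)) (lF n hn j (mP n j - 1)) (xF n hn j) (lF n hn j 0) := by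
    by_cases hx : 3 * j + 3 = n
    · -- x = n - 1 : use the wrap edge (n ≡ 0 mod 3)
      have h30 : n % 3 = 0 := by omega
      have e1 : lF n hn j (mP n j - 1) = cF n hn (MM n - 1) :=
        lF_eq_cF hn hj (by omega) (by omega)
          (by unfold mP lnat cnat MM;
              rcases hsk with ⟨h0, h1, h2, h3⟩ | ⟨h0, h1, h2⟩ | ⟨h0, h1, h2, h3⟩ <;>
                split_ifs <;> omega)
      have e2 : lF n hn j 0 = cF n hn 0 :=
        lF_eq_cF hn hj (by omega) (by omega)
          (by simp only [mP, lnat, cnat];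
              rcases hsk with ⟨h0, h1, h2, h3⟩ | ⟨h0, h1, h2⟩ | ⟨h0, h1, h2, h3⟩ <;>
                split_ifs <;> omega)
      refine baseCl hn cycF2 (Or.inr (Or.inr ?_))
      rw [e1, e2]
      exact wrap_mem hn h30
    · have hi' : 2 * j + 2 < MM n := by
        rcases hsk with ⟨h0, h1, h2, h3⟩ | ⟨h0, h1, h2⟩ | ⟨h0, h1, h2, h3⟩ <;> omega
      have e1 : lF n hn j (mP n j - 1) = cF n hn (2 * j + 1) :=
        lF_eq_cF hn hj (by omega) (by omega)
          (by unfold mP lnat cnat;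
              rcases hsk with ⟨h0, h1, h2, h3⟩ | ⟨h0, h1, h2⟩ | ⟨h0, h1, h2, h3⟩ <;>
                split_ifs <;> omega)
      have e2 : lF n hn j 0 = cF n hn (2 * j + 2) :=
        lF_eq_cF hn hj (by omega) hi'
          (by simp only [mP, lnat, cnat];
              rcases hsk with ⟨h0, h1, h2, h3⟩ | ⟨h0, h1, h2⟩ | ⟨h0, h1, h2, h3⟩ <;>
                split_ifs <;> omega)
      refine baseCl hn cycF2 (Or.inr (Or.inr ?_))
      rw [e1, e2]
      exact mem_Ed hn hi' (fun hm => by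
        rcases hsk with ⟨h0, h1, h2, h3⟩ | ⟨h0, h1, h2⟩ | ⟨h0, h1, h2, h3⟩ <;> omega)
  have cycF3 : cyc (lF n hn j 0) (lF n hn j 1) (xF n hn j) := by
    unfold cyc
    rw [lval hn hj (by omega), lval hn hj (by omega), xval hn hj]
    simp only [mP, lnat]
    rcases hsk with ⟨h0, h1, h2, h3⟩ | ⟨h0, h1, h2⟩ | ⟨h0, h1, h2, h3⟩ <;>
      split_ifs <;> omega
  have F3 : Cl (TE (Ed n hn)) (lF n hn j 0) (lF n hn j 1) (xF n hn j) := by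
    by_cases hx : 3 * j + 3 = n
    · have e1 : lF n hn j 0 = cF n hn 0 :=
        lF_eq_cF hn hj (by omega) (by omega)
          (by simp only [mP, lnat, cnat];
              rcases hsk with ⟨h0, h1, h2, h3⟩ | ⟨h0, h1, h2⟩ | ⟨h0, h1, h2, h3⟩ <;>
                split_ifs <;> omega)
      have e2 : lF n hn j 1 = cF n hn 1 :=
        lF_eq_cF hn hj (by omega) (by omega)
          (by simp only [mP, lnat, cnat];
              rcases hsk with ⟨h0, h1, h2, h3⟩ | ⟨h0, h1, h2⟩ | ⟨h0, h1, h2, h3⟩ <;>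
                split_ifs <;> omega)
      refine baseCl hn cycF3 (Or.inl ?_)
      rw [e1, e2]
      exact mem_Ed hn (by omega) (fun hm => by
        rcases hsk with ⟨h0, h1, h2, h3⟩ | ⟨h0, h1, h2⟩ | ⟨h0, h1, h2, h3⟩ <;> omega)
    · have hi' : 2 * j + 3 < MM n := by
        rcases hsk with ⟨h0, h1, h2, h3⟩ | ⟨h0, h1, h2⟩ | ⟨h0, h1, h2, h3⟩ <;> omega
      have e1 : lF n hn j 0 = cF n hn (2 * j + 2) :=
        lF_eq_cF hn hj (by omega) (by omega)
          (by simp only [mP, lnat, cnat];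
              rcases hsk with ⟨h0, h1, h2, h3⟩ | ⟨h0, h1, h2⟩ | ⟨h0, h1, h2, h3⟩ <;>
                split_ifs <;> omega)
      have e2 : lF n hn j 1 = cF n hn (2 * j + 3) :=
        lF_eq_cF hn hj (by omega) hi'
          (by simp only [mP, lnat, cnat];
              rcases hsk with ⟨h0, h1, h2, h3⟩ | ⟨h0, h1, h2⟩ | ⟨h0, h1, h2, h3⟩ <;>
                split_ifs <;> omega)
      refine baseCl hn cycF3 (Or.inl ?_)
      rw [e1, e2]
      exact mem_Ed hn hi' (fun hm => by
        rcases hsk with ⟨h0, h1, h2, h3⟩ | ⟨h0, h1, h2⟩ | ⟨h0, h1, h2, h3⟩ <;> omega)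
  have PC := peel (T := TE (Ed n hn)) (xF n hn j) (lF n hn j) (mP n j) hm4 Hp F1 F2 F3
  -- key : triples with x in first position
  have key : ∀ b c : Fin n, (b.val % 3 = 2 → 3 * j + 2 ≤ b.val) →
      (c.val % 3 = 2 → 3 * j + 2 ≤ c.val) → cyc (xF n hn j) b c →
      Cl (TE (Ed n hn)) (xF n hn j) b c := by
    intro b c hb hc hcyc
    obtain ⟨ne1, ne2, ne3⟩ := cyc_ne hcyc
    obtain ⟨ib, hibm, rfl⟩ := l_surj hn hj b hb (Ne.symm ne1)
    obtain ⟨ic, hicm, rfl⟩ := l_surj hn hj c hc (Ne.symm ne3)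
    rcases lt_trichotomy ib ic with h | h | h
    · exact PC ib ic h hicm
    · exact absurd rfl (by rw [h] at ne2; exact ne2)
    · exact absurd (cyc_lF hn hj h hibm) (fun h' => cyc_asym h' hcyc)
  -- assemble
  intro a b c ha hb hc hcyc
  have hstep : ∀ y : Fin n, y ≠ xF n hn j → (y.val % 3 = 2 → 3 * j + 2 ≤ y.val) →
      (y.val % 3 = 2 → 3 * (j + 1) + 2 ≤ y.val) := by
    intro y hy h1 h2
    have : y.val ≠ 3 * j + 2 := fun h => hy (Fin.ext (by rw [xval hn hj]; exact h))
    omega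
  rcases eq_or_ne a (xF n hn j) with rfl | hna
  · exact key b c hb hc hcyc
  · rcases eq_or_ne b (xF n hn j) with rfl | hnb
    · exact (key c a hc ha (cyc_rot hcyc)).ax1.ax1
    · rcases eq_or_ne c (xF n hn j) with rfl | hnc
      · exact (key a b ha hb (cyc_rot (cyc_rot hcyc))).ax1
      · exact prev a b c (hstep a hna ha) (hstep b hnb hb) (hstep c hnc hc) hcyc

lemma Der_all {n : ℕ} (hn : 4 ≤ n) : ∀ k, k ≤ sk n → Der n hn (sk n - k) := by
  intro k
  induction k with
  | zero => intro _; exact Der_top hn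
  | succ k ih =>
    intro hk
    have prev := ih (by omega)
    have e : sk n - (k + 1) + 1 = sk n - k := by omega
    exact Der_step hn (by omega) (by rw [e]; exact prev)


end OTaux


/-- Theorem 1 (Theorem `thm:conv`): for every `n ≥ 4`, `n` points in convex
position admit an OT-graph with at most `⌊2n/3⌋` edges. -/
theorem convex_has_OT_graph_two_thirds (n : ℕ) (hn : 4 ≤ n) :
    ∃ E : Finset (Sym2 (Fin n)), E.card ≤ 2 * n / 3 ∧
      ∀ a b c : Fin n, a ≠ b → b ≠ c → a ≠ c → cyc a b c → Cl (TE E) a b c := by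
  refine ⟨OTaux.Ed n hn, OTaux.Ed_card hn, ?_⟩
  intro a b c _ _ _ hcyc
  have D0 := OTaux.Der_all hn (OTaux.sk n) le_rfl
  rw [Nat.sub_self] at D0
  exact D0 a b c (fun h => by omega) (fun h => by omega) (fun h => by omega) hcyc
end

section
/- For every integer n ≥ 3, let E be the set of the n convex hull edges, i.e. E = { {i, i+1 mod n} : i ∈ Fin n } as unordered pairs of Fin n. Then the derivation closure Cl(T_E) contains every ordered triple (a,b,c) of pairwise distinct elements of Fin n with cyc(a,b,c). (That is, the convex hull edges of n points in convex position form an OT-graph, so c_n ≤ n.) -/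
/-- The cyclically next element of `Fin n`. -/
def next {n : ℕ} (i : Fin n) : Fin n :=
  ⟨(i.val + 1) % n, Nat.mod_lt _ (Nat.lt_of_le_of_lt (Nat.zero_le _) i.isLt)⟩

/-- Cyclic distance from `t` to `x` going counterclockwise. -/
def dd (n : ℕ) (t x : Fin n) : ℕ := (x.val + n - t.val) % n

lemma dd_eq {n : ℕ} (t x : Fin n) :
    dd n t x = if t.val ≤ x.val then x.val - t.val else x.val + n - t.val := by
  unfold dd
  have ht := t.isLt; have hx := x.isLt
  split_ifs with h
  · have h2 : x.val + n - t.val = (x.val - t.val) + n := by omega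
    rw [h2, Nat.add_mod_right, Nat.mod_eq_of_lt (by omega)]
  · exact Nat.mod_eq_of_lt (by omega)

lemma next_val {n : ℕ} (i : Fin n) :
    (next i).val = if i.val + 1 = n then 0 else i.val + 1 := by
  show (i.val + 1) % n = _
  have := i.isLt
  split_ifs with h
  · rw [h, Nat.mod_self]
  · exact Nat.mod_eq_of_lt (by omega)

lemma dd_self {n : ℕ} (t : Fin n) : dd n t t = 0 := by
  unfold dd
  have h : t.val + n - t.val = n := by omega
  rw [h, Nat.mod_self]

lemma dd_lt {n : ℕ} (t x : Fin n) : dd n t x < n :=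
  Nat.mod_lt _ (Nat.lt_of_le_of_lt (Nat.zero_le _) t.isLt)

lemma dd_eq_zero {n : ℕ} {t x : Fin n} (h : dd n t x = 0) : t = x := by
  have h1 := dd_eq t x
  have ht := t.isLt; have hx := x.isLt
  apply Fin.ext
  rw [h1] at h
  split_ifs at h <;> omega

lemma ne_of_dd_ne {n : ℕ} {t x y : Fin n} (h : dd n t x ≠ dd n t y) : x ≠ y :=
  fun he => h (by rw [he])

lemma ne_of_dd_pos {n : ℕ} {t x : Fin n} (h : dd n t x ≠ 0) : t ≠ x :=
  fun he => h (by rw [← he, dd_self])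

lemma cyc_iff {n : ℕ} {t p r : Fin n} (h1 : t ≠ p) (h2 : p ≠ r) (h3 : t ≠ r) :
    cyc t p r ↔ dd n t p < dd n t r := by
  have h1' : t.val ≠ p.val := fun h => h1 (Fin.ext h)
  have h2' : p.val ≠ r.val := fun h => h2 (Fin.ext h)
  have h3' : t.val ≠ r.val := fun h => h3 (Fin.ext h)
  have ht := t.isLt; have hp := p.isLt; have hr := r.isLt
  simp only [cyc, dd_eq]
  split_ifs <;> omega

lemma eq_next_of_dd {n : ℕ} {t p r : Fin n} (h : dd n t r = dd n t p + 1) :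
    r = next p := by
  have h1 := dd_eq t p
  have h2 := dd_eq t r
  have h3 := next_val p
  have ht := t.isLt; have hp := p.isLt; have hr := r.isLt
  apply Fin.ext
  rw [h1, h2] at h
  rw [h3]
  split_ifs at h ⊢ <;> omega

lemma dd_next {n : ℕ} {t p : Fin n} (h : dd n t p + 1 < n) :
    dd n t (next p) = dd n t p + 1 := by
  have h1 := dd_eq t p
  have h2 := dd_eq t (next p)
  have h3 := next_val p
  have ht := t.isLt; have hp := p.isLt
  rw [h3] at h2
  rw [h1] at h
  rw [h1, h2]
  split_ifs at h ⊢ <;> omega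

/-- The hull edges. -/
def hullE (n : ℕ) : Finset (Sym2 (Fin n)) :=
  Finset.image (fun i : Fin n => s(i, next i)) Finset.univ

lemma mem_hullE {n : ℕ} (i : Fin n) : s(i, next i) ∈ hullE n :=
  Finset.mem_image.mpr ⟨i, Finset.mem_univ i, rfl⟩

lemma cl_base {n : ℕ} {t p r : Fin n} (h1 : t ≠ p) (h2 : p ≠ r) (h3 : t ≠ r)
    (hc : cyc t p r)
    (he : s(t, p) ∈ hullE n ∨ s(p, r) ∈ hullE n ∨ s(t, r) ∈ hullE n) :
    Cl (TE (hullE n)) t p r :=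
  Cl.base ⟨h1, h2, h3, hc, he⟩

lemma key {n : ℕ} (hn : 3 ≤ n) :
    ∀ k : ℕ, ∀ t p r : Fin n, 1 ≤ dd n t p → dd n t p < dd n t r →
      dd n t r - dd n t p = k + 1 → Cl (TE (hullE n)) t p r := by
  intro k
  induction k with
  | zero =>
    intro t p r hp hlt hk
    have hr : dd n t r = dd n t p + 1 := by omega
    have hrp : r = next p := eq_next_of_dd hr
    have htp : t ≠ p := ne_of_dd_pos (by omega)
    have htr : t ≠ r := ne_of_dd_pos (by omega)
    have hpr : p ≠ r := ne_of_dd_ne (t := t) (by omega)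
    exact cl_base htp hpr htr ((cyc_iff htp hpr htr).mpr hlt)
      (Or.inr (Or.inl (hrp ▸ mem_hullE p)))
  | succ k ih =>
    intro t p r hp hlt hk
    have hdrlt : dd n t r < n := dd_lt t r
    by_cases hA : dd n t p = 1
    · -- p = next t, base fact
      have hpnt : p = next t := eq_next_of_dd (t := t) (by rw [dd_self]; omega)
      have htp : t ≠ p := ne_of_dd_pos (by omega)
      have htr : t ≠ r := ne_of_dd_pos (by omega)
      have hpr : p ≠ r := ne_of_dd_ne (t := t) (by omega)
      exact cl_base htp hpr htr ((cyc_iff htp hpr htr).mpr hlt)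
        (Or.inl (hpnt ▸ mem_hullE t))
    · -- interior step via Ax5 anchored at (t, next t)
      set q := next p with hqdef
      have hq : dd n t q = dd n t p + 1 := dd_next (by omega)
      have hnt : dd n t (next t) = 1 := by
        have := dd_next (t := t) (p := t) (by rw [dd_self]; omega)
        rwa [dd_self] at this
      have htnt : t ≠ next t := ne_of_dd_pos (by omega)
      have htp : t ≠ p := ne_of_dd_pos (by omega)
      have htq : t ≠ q := ne_of_dd_pos (by omega)
      have htr : t ≠ r := ne_of_dd_pos (by omega)
      have hntp : next t ≠ p := ne_of_dd_ne (t := t) (by omega)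
      have hntq : next t ≠ q := ne_of_dd_ne (t := t) (by omega)
      have hntr : next t ≠ r := ne_of_dd_ne (t := t) (by omega)
      have hpq : p ≠ q := ne_of_dd_ne (t := t) (by omega)
      have hqr : q ≠ r := ne_of_dd_ne (t := t) (by omega)
      apply Cl.ax5 (s := next t) (q := q)
      · exact cl_base htnt hntp htp ((cyc_iff htnt hntp htp).mpr (by omega))
          (Or.inl (mem_hullE t))
      · exact cl_base htnt hntq htq ((cyc_iff htnt hntq htq).mpr (by omega))
          (Or.inl (mem_hullE t))
      · exact cl_base htnt hntr htr ((cyc_iff htnt hntr htr).mpr (by omega))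
          (Or.inl (mem_hullE t))
      · exact cl_base htp hpq htq ((cyc_iff htp hpq htq).mpr (by omega))
          (Or.inr (Or.inl (mem_hullE p)))
      · exact ih t q r (by omega) (by omega) (by omega)

/-- Lemma `lem:conv`: the `n` convex hull edges `{i, i+1 mod n}` form an
OT-graph for `n ≥ 3` points in convex position. -/
theorem hull_edges_form_OT_graph (n : ℕ) (hn : 3 ≤ n) :
    ∀ a b c : Fin n, a ≠ b → b ≠ c → a ≠ c → cyc a b c →
      Cl (TE (Finset.image (fun i : Fin n => s(i, next i)) Finset.univ)) a b c := by
  intro a b c hab hbc hac hcyc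
  have h1 : dd n a b < dd n a c := (cyc_iff hab hbc hac).mp hcyc
  have h2 : 1 ≤ dd n a b := by
    rcases Nat.eq_zero_or_pos (dd n a b) with h | h
    · exact absurd (dd_eq_zero h) hab
    · exact h
  exact key hn (dd n a c - dd n a b - 1) a b c h2 h1 (by omega)
end

section
/- Let ccw be a ternary relation on a type α satisfying, for all pairwise distinct p,q,r: Axiom 1 (ccw p q r → ccw q r p), Axiom 2 (ccw p q r → ¬ ccw p r q), Axiom 3 (ccw p q r ∨ ccw p r q), and, for all pairwise distinct p,q,r,s,t: Axiom 5 (ccw t s p ∧ ccw t s q ∧ ccw t s r ∧ ccw t p q ∧ ccw t q r → ccw t p r). Then ccw satisfies Axiom 5' (dual transitivity): for all pairwise distinct p,q,r,s,t, if ccw s t p, ccw s t q, ccw s t r, ccw t p q and ccw t q r, then ccw t p r. -/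
/-- Knuth: Axioms 1, 2, 3 and 5 imply Axiom 5' (dual transitivity). -/
theorem dual_transitivity {α : Type*} (ccw : α → α → α → Prop)
    (ax1 : ∀ p q r : α, p ≠ q → q ≠ r → p ≠ r → ccw p q r → ccw q r p)
    (ax2 : ∀ p q r : α, p ≠ q → q ≠ r → p ≠ r → ccw p q r → ¬ ccw p r q)
    (ax3 : ∀ p q r : α, p ≠ q → q ≠ r → p ≠ r → (ccw p q r ∨ ccw p r q))
    (ax5 : ∀ p q r s t : α, p ≠ q → p ≠ r → p ≠ s → p ≠ t → q ≠ r → q ≠ s →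
      q ≠ t → r ≠ s → r ≠ t → s ≠ t →
      ccw t s p → ccw t s q → ccw t s r → ccw t p q → ccw t q r → ccw t p r) :
    ∀ p q r s t : α, p ≠ q → p ≠ r → p ≠ s → p ≠ t → q ≠ r → q ≠ s →
      q ≠ t → r ≠ s → r ≠ t → s ≠ t →
      ccw s t p → ccw s t q → ccw s t r → ccw t p q → ccw t q r → ccw t p r := by
  intro p q r s t hpq hpr hps hpt hqr hqs hqt hrs hrt hst h1 h2 h3 h4 h5
  by_contra hc
  have htrp : ccw t r p := (ax3 t p r hpt.symm hpr hrt.symm).resolve_left hc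
  rcases ax3 p q r hpq hqr hpr with c0 | c0
  · 
    rcases ax3 s p q hps.symm hpq hqs.symm with c1 | c1
    · 
      rcases ax3 s q r hqs.symm hqr hrs.symm with c2 | c2
      · 
        rcases ax3 s p r hps.symm hpr hrs.symm with c3 | c3
        · 
          exact ax2 p t r hpt hrt.symm hpr (ax1 r p t hpr.symm hpt hrt (ax1 t r p hrt.symm hpr.symm hpt.symm htrp)) (ax5 r s t q p hrs hrt hqr.symm hpr.symm hst hqs.symm hps.symm hqt.symm hpt.symm hpq.symm c0 (ax1 s p q hps.symm hpq hqs.symm c1) (ax1 t p q hpt.symm hpq hqt.symm h4) (ax1 s p r hps.symm hpr hrs.symm c3) (ax1 t p s hpt.symm hps hst.symm (ax1 s t p hst hpt.symm hps.symm h1)))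
        · 
          exact ax2 s r p hrs.symm hpr.symm hps.symm c3 (ax5 p q r t s hpq hpr hpt hps hqr hqt hqs hrt hrs hst.symm h1 h2 h3 c1 c2)
      · 
        rcases ax3 s p r hps.symm hpr hrs.symm with c3 | c3
        · 
          exact ax2 p t r hpt hrt.symm hpr (ax1 r p t hpr.symm hpt hrt (ax1 t r p hrt.symm hpr.symm hpt.symm htrp)) (ax5 r s t q p hrs hrt hqr.symm hpr.symm hst hqs.symm hps.symm hqt.symm hpt.symm hpq.symm c0 (ax1 s p q hps.symm hpq hqs.symm c1) (ax1 t p q hpt.symm hpq hqt.symm h4) (ax1 s p r hps.symm hpr hrs.symm c3) (ax1 t p s hpt.symm hps hst.symm (ax1 s t p hst hpt.symm hps.symm h1)))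
        · 
          exact ax2 r t q hrt hqt.symm hqr.symm (ax1 q r t hqr hrt hqt (ax1 t q r hqt.symm hqr hrt.symm h5)) (ax5 q s t p r hqs hqt hpq.symm hqr hst hps.symm hrs.symm hpt.symm hrt.symm hpr (ax1 q r p hqr hpr.symm hpq.symm (ax1 p q r hpq hqr hpr c0)) (ax1 s r p hrs.symm hpr.symm hps.symm c3) (ax1 t r p hrt.symm hpr.symm hpt.symm htrp) (ax1 s r q hrs.symm hqr.symm hqs.symm c2) (ax1 t r s hrt.symm hrs hst.symm (ax1 s t r hst hrt.symm hrs.symm h3)))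
    · 
      rcases ax3 s q r hqs.symm hqr hrs.symm with c2 | c2
      · 
        rcases ax3 s p r hps.symm hpr hrs.symm with c3 | c3
        · 
          exact ax2 q t p hqt hpt.symm hpq.symm (ax1 p q t hpq hqt hpt (ax1 t p q hpt.symm hpq hqt.symm h4)) (ax5 p s t r q hps hpt hpr hpq hst hrs.symm hqs.symm hrt.symm hqt.symm hqr.symm (ax1 p q r hpq hqr hpr c0) (ax1 s q r hqs.symm hqr hrs.symm c2) (ax1 t q r hqt.symm hqr hrt.symm h5) (ax1 s q p hqs.symm hpq.symm hps.symm c1) (ax1 t q s hqt.symm hqs hst.symm (ax1 s t q hst hqt.symm hqs.symm h2)))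
        · 
          exact ax2 q t p hqt hpt.symm hpq.symm (ax1 p q t hpq hqt hpt (ax1 t p q hpt.symm hpq hqt.symm h4)) (ax5 p s t r q hps hpt hpr hpq hst hrs.symm hqs.symm hrt.symm hqt.symm hqr.symm (ax1 p q r hpq hqr hpr c0) (ax1 s q r hqs.symm hqr hrs.symm c2) (ax1 t q r hqt.symm hqr hrt.symm h5) (ax1 s q p hqs.symm hpq.symm hps.symm c1) (ax1 t q s hqt.symm hqs hst.symm (ax1 s t q hst hqt.symm hqs.symm h2)))
      · 
        rcases ax3 s p r hps.symm hpr hrs.symm with c3 | c3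
        · 
          exact ax2 s q p hqs.symm hpq.symm hps.symm c1 (ax5 p r q t s hpr hpq hpt hps hqr.symm hrt hrs hqt hqs hst.symm h1 h3 h2 c3 c2)
        · 
          exact ax2 r t q hrt hqt.symm hqr.symm (ax1 q r t hqr hrt hqt (ax1 t q r hqt.symm hqr hrt.symm h5)) (ax5 q s t p r hqs hqt hpq.symm hqr hst hps.symm hrs.symm hpt.symm hrt.symm hpr (ax1 q r p hqr hpr.symm hpq.symm (ax1 p q r hpq hqr hpr c0)) (ax1 s r p hrs.symm hpr.symm hps.symm c3) (ax1 t r p hrt.symm hpr.symm hpt.symm htrp) (ax1 s r q hrs.symm hqr.symm hqs.symm c2) (ax1 t r s hrt.symm hrs hst.symm (ax1 s t r hst hrt.symm hrs.symm h3)))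
  · 
    rcases ax3 s p q hps.symm hpq hqs.symm with c1 | c1
    · 
      rcases ax3 s q r hqs.symm hqr hrs.symm with c2 | c2
      · 
        rcases ax3 s p r hps.symm hpr hrs.symm with c3 | c3
        · 
          exact ax2 r q p hqr.symm hpq.symm hpr.symm (ax1 p r q hpr hqr.symm hpq c0) (ax5 p t q s r hpt hpq hps hpr hqt.symm hst.symm hrt.symm hqs hqr hrs.symm (ax1 p r s hpr hrs hps (ax1 s p r hps.symm hpr hrs.symm c3)) (ax1 t r s hrt.symm hrs hst.symm (ax1 s t r hst hrt.symm hrs.symm h3)) (ax1 q r s hqr hrs hqs (ax1 s q r hqs.symm hqr hrs.symm c2)) (ax1 t r p hrt.symm hpr.symm hpt.symm htrp) (ax1 q r t hqr hrt hqt (ax1 t q r hqt.symm hqr hrt.symm h5)))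
        · 
          exact ax2 s r p hrs.symm hpr.symm hps.symm c3 (ax5 p q r t s hpq hpr hpt hps hqr hqt hqs hrt hrs hst.symm h1 h2 h3 c1 c2)
      · 
        rcases ax3 s p r hps.symm hpr hrs.symm with c3 | c3
        · 
          exact ax2 q t p hqt hpt.symm hpq.symm (ax1 p q t hpq hqt hpt (ax1 t p q hpt.symm hpq hqt.symm h4)) (ax5 p r t s q hpr hpt hps hpq hrt hrs hqr.symm hst.symm hqt.symm hqs.symm (ax1 p q s hpq hqs hps (ax1 s p q hps.symm hpq hqs.symm c1)) (ax1 r q s hqr.symm hqs hrs (ax1 s r q hrs.symm hqr.symm hqs.symm c2)) (ax1 t q s hqt.symm hqs hst.symm (ax1 s t q hst hqt.symm hqs.symm h2)) (ax1 r q p hqr.symm hpq.symm hpr.symm (ax1 p r q hpr hqr.symm hpq c0)) (ax1 t q r hqt.symm hqr hrt.symm h5))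
        · 
          exact ax2 q t p hqt hpt.symm hpq.symm (ax1 p q t hpq hqt hpt (ax1 t p q hpt.symm hpq hqt.symm h4)) (ax5 p r t s q hpr hpt hps hpq hrt hrs hqr.symm hst.symm hqt.symm hqs.symm (ax1 p q s hpq hqs hps (ax1 s p q hps.symm hpq hqs.symm c1)) (ax1 r q s hqr.symm hqs hrs (ax1 s r q hrs.symm hqr.symm hqs.symm c2)) (ax1 t q s hqt.symm hqs hst.symm (ax1 s t q hst hqt.symm hqs.symm h2)) (ax1 r q p hqr.symm hpq.symm hpr.symm (ax1 p r q hpr hqr.symm hpq c0)) (ax1 t q r hqt.symm hqr hrt.symm h5))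
    · 
      rcases ax3 s q r hqs.symm hqr hrs.symm with c2 | c2
      · 
        rcases ax3 s p r hps.symm hpr hrs.symm with c3 | c3
        · 
          exact ax2 r q p hqr.symm hpq.symm hpr.symm (ax1 p r q hpr hqr.symm hpq c0) (ax5 p t q s r hpt hpq hps hpr hqt.symm hst.symm hrt.symm hqs hqr hrs.symm (ax1 p r s hpr hrs hps (ax1 s p r hps.symm hpr hrs.symm c3)) (ax1 t r s hrt.symm hrs hst.symm (ax1 s t r hst hrt.symm hrs.symm h3)) (ax1 q r s hqr hrs hqs (ax1 s q r hqs.symm hqr hrs.symm c2)) (ax1 t r p hrt.symm hpr.symm hpt.symm htrp) (ax1 q r t hqr hrt hqt (ax1 t q r hqt.symm hqr hrt.symm h5)))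
        · 
          exact ax2 p r q hpr hqr.symm hpq c0 (ax5 q t r s p hqt hqr hqs hpq.symm hrt.symm hst.symm hpt.symm hrs hpr.symm hps.symm (ax1 q p s hpq.symm hps hqs (ax1 s q p hqs.symm hpq.symm hps.symm c1)) (ax1 t p s hpt.symm hps hst.symm (ax1 s t p hst hpt.symm hps.symm h1)) (ax1 r p s hpr.symm hps hrs (ax1 s r p hrs.symm hpr.symm hps.symm c3)) (ax1 t p q hpt.symm hpq hqt.symm h4) (ax1 r p t hpr.symm hpt hrt (ax1 t r p hrt.symm hpr.symm hpt.symm htrp)))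
      · 
        rcases ax3 s p r hps.symm hpr hrs.symm with c3 | c3
        · 
          exact ax2 s q p hqs.symm hpq.symm hps.symm c1 (ax5 p r q t s hpr hpq hpt hps hqr.symm hrt hrs hqt hqs hst.symm h1 h3 h2 c3 c2)
        · 
          exact ax2 p r q hpr hqr.symm hpq c0 (ax5 q t r s p hqt hqr hqs hpq.symm hrt.symm hst.symm hpt.symm hrs hpr.symm hps.symm (ax1 q p s hpq.symm hps hqs (ax1 s q p hqs.symm hpq.symm hps.symm c1)) (ax1 t p s hpt.symm hps hst.symm (ax1 s t p hst hpt.symm hps.symm h1)) (ax1 r p s hpr.symm hps hrs (ax1 s r p hrs.symm hpr.symm hps.symm c3)) (ax1 t p q hpt.symm hpq hqt.symm h4) (ax1 r p t hpr.symm hpt hrt (ax1 t r p hrt.symm hpr.symm hpt.symm htrp)))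
end

section
/- Each OT-graph determines a unique order type: let ccw₁ and ccw₂ be two ternary relations on a type α, each satisfying Knuth's Axioms 1–5 for pairwise distinct points, and let T be a set of ordered triples of pairwise distinct points such that for every (a,b,c) ∈ T both ccw₁ a b c and ccw₂ a b c hold. If the derivation closure Cl(T) contains, for every set of three pairwise distinct points {a,b,c}, at least one ordered triple whose underlying set is {a,b,c}, then ccw₁ and ccw₂ agree on all triples of pairwise distinct points: ccw₁ a b c ↔ ccw₂ a b c. -/
/-- `ccw` is a CC-system: it satisfies Knuth's Axioms 1–5 for pairwise
distinct points. -/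
def IsCCSystem {α : Type*} (ccw : α → α → α → Prop) : Prop :=
  (∀ p q r : α, p ≠ q → q ≠ r → p ≠ r → ccw p q r → ccw q r p) ∧
  (∀ p q r : α, p ≠ q → q ≠ r → p ≠ r → ccw p q r → ¬ ccw p r q) ∧
  (∀ p q r : α, p ≠ q → q ≠ r → p ≠ r → (ccw p q r ∨ ccw p r q)) ∧
  (∀ p q r t : α, p ≠ q → p ≠ r → p ≠ t → q ≠ r → q ≠ t → r ≠ t →
    ccw t q r → ccw p t r → ccw p q t → ccw p q r) ∧
  (∀ p q r s t : α, p ≠ q → p ≠ r → p ≠ s → p ≠ t → q ≠ r → q ≠ s → q ≠ t →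
    r ≠ s → r ≠ t → s ≠ t →
    ccw t s p → ccw t s q → ccw t s r → ccw t p q → ccw t q r → ccw t p r)

theorem CC.dual {α : Type*} {ccw : α → α → α → Prop} (h : IsCCSystem ccw)
    (p q r s t : α)
    (hpq' : p ≠ q) (hpr' : p ≠ r) (hps' : p ≠ s) (hpt' : p ≠ t) (hqr' : q ≠ r)
    (hqs' : q ≠ s) (hqt' : q ≠ t) (hrs' : r ≠ s) (hrt' : r ≠ t) (hst' : s ≠ t)
    (hstp : ccw s t p) (hstq : ccw s t q) (hstr : ccw s t r)
    (htpq : ccw t p q) (htqr : ccw t q r) : ccw t p r := by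
  obtain ⟨ax1, ax2, ax3, ax4, ax5⟩ := h
  have npq : p ≠ q := hpq'
  have nqp : q ≠ p := hpq'.symm
  have npr : p ≠ r := hpr'
  have nrp : r ≠ p := hpr'.symm
  have nps : p ≠ s := hps'
  have nsp : s ≠ p := hps'.symm
  have npt : p ≠ t := hpt'
  have ntp : t ≠ p := hpt'.symm
  have nqr : q ≠ r := hqr'
  have nrq : r ≠ q := hqr'.symm
  have nqs : q ≠ s := hqs'
  have nsq : s ≠ q := hqs'.symm
  have nqt : q ≠ t := hqt'
  have ntq : t ≠ q := hqt'.symm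
  have nrs : r ≠ s := hrs'
  have nsr : s ≠ r := hrs'.symm
  have nrt : r ≠ t := hrt'
  have ntr : t ≠ r := hrt'.symm
  have nst : s ≠ t := hst'
  have nts : t ≠ s := hst'.symm
  by_contra hc
  have htrp : ccw t r p := (ax3 t p r ntp npr ntr).resolve_left hc
  rcases ax3 s p q nsp npq nsq with hspq | hsqp
  · -- hspq
    rcases ax3 s q r nsq nqr nsr with hsqr | hsrq
    · -- hsqr
      rcases ax3 s p r nsp npr nsr with hspr | hsrp
      · -- hspr
        rcases ax3 p q r npq nqr npr with hpqr | hprq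
        · -- hpqr
          have hpqs : ccw p q s := ax1 s p q nsp npq nsq hspq
          have hpqt : ccw p q t := ax1 t p q ntp npq ntq htpq
          have htps : ccw t p s := ax1 s t p nst ntp nsp hstp
          have hpst : ccw p s t := ax1 t p s ntp nps nts htps
          have hrpt : ccw r p t := ax1 t r p ntr nrp ntp htrp
          have hptr : ccw p t r := ax1 r p t nrp npt nrt hrpt
          have hpsr : ccw p s r := ax5 s t r q p nst nsr nsq nsp ntr ntq ntp nrq nrp nqp hpqs hpqt hpqr hpst hptr
          have hsrp : ccw s r p := ax1 p s r nps nsr npr hpsr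
          exact ax2 s r p nsr nrp nsp hsrp hspr
        · -- hprq
          have hrqp : ccw r q p := ax1 p r q npr nrq npq hprq
          have htqp : ccw t q p := ax4 t q p r ntq ntp ntr nqp nqr npr hrqp htrp htqr
          exact ax2 t q p ntq nqp ntp htqp htpq
      · -- hsrp
        rcases ax3 p q r npq nqr npr with hpqr | hprq
        · -- hpqr
          have hsqp : ccw s q p := ax5 q r p t s nqr nqp nqt nqs nrp nrt nrs npt nps nts hstq hstr hstp hsqr hsrp
          exact ax2 s q p nsq nqp nsp hsqp hspq
        · -- hprq
          have hrqp : ccw r q p := ax1 p r q npr nrq npq hprq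
          have htqp : ccw t q p := ax4 t q p r ntq ntp ntr nqp nqr npr hrqp htrp htqr
          exact ax2 t q p ntq nqp ntp htqp htpq
    · -- hsrq
      rcases ax3 s p r nsp npr nsr with hspr | hsrp
      · -- hspr
        rcases ax3 p q r npq nqr npr with hpqr | hprq
        · -- hpqr
          have hpqs : ccw p q s := ax1 s p q nsp npq nsq hspq
          have hpqt : ccw p q t := ax1 t p q ntp npq ntq htpq
          have htps : ccw t p s := ax1 s t p nst ntp nsp hstp
          have hpst : ccw p s t := ax1 t p s ntp nps nts htps
          have hrpt : ccw r p t := ax1 t r p ntr nrp ntp htrp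
          have hptr : ccw p t r := ax1 r p t nrp npt nrt hrpt
          have hpsr : ccw p s r := ax5 s t r q p nst nsr nsq nsp ntr ntq ntp nrq nrp nqp hpqs hpqt hpqr hpst hptr
          have hsrp : ccw s r p := ax1 p s r nps nsr npr hpsr
          exact ax2 s r p nsr nrp nsp hsrp hspr
        · -- hprq
          have hrqp : ccw r q p := ax1 p r q npr nrq npq hprq
          have htqp : ccw t q p := ax4 t q p r ntq ntp ntr nqp nqr npr hrqp htrp htqr
          exact ax2 t q p ntq nqp ntp htqp htpq
      · -- hsrp
        rcases ax3 p q r npq nqr npr with hpqr | hprq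
        · -- hpqr
          have hrps : ccw r p s := ax1 s r p nsr nrp nsp hsrp
          have hrpt : ccw r p t := ax1 t r p ntr nrp ntp htrp
          have hqrp : ccw q r p := ax1 p q r npq nqr npr hpqr
          have hrpq : ccw r p q := ax1 q r p nqr nrp nqp hqrp
          have htrs : ccw t r s := ax1 s t r nst ntr nsr hstr
          have hrst : ccw r s t := ax1 t r s ntr nrs nts htrs
          have hqrt : ccw q r t := ax1 t q r ntq nqr ntr htqr
          have hrtq : ccw r t q := ax1 q r t nqr nrt nqt hqrt
          have hrsq : ccw r s q := ax5 s t q p r nst nsq nsp nsr ntq ntp ntr nqp nqr npr hrps hrpt hrpq hrst hrtq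
          have hsqr : ccw s q r := ax1 r s q nrs nsq nrq hrsq
          exact ax2 s q r nsq nqr nsr hsqr hsrq
        · -- hprq
          have hrqp : ccw r q p := ax1 p r q npr nrq npq hprq
          have htqp : ccw t q p := ax4 t q p r ntq ntp ntr nqp nqr npr hrqp htrp htqr
          exact ax2 t q p ntq nqp ntp htqp htpq
  · -- hsqp
    rcases ax3 s q r nsq nqr nsr with hsqr | hsrq
    · -- hsqr
      rcases ax3 s p r nsp npr nsr with hspr | hsrp
      · -- hspr
        rcases ax3 p q r npq nqr npr with hpqr | hprq
        · -- hpqr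
          have hqrs : ccw q r s := ax1 s q r nsq nqr nsr hsqr
          have hqrt : ccw q r t := ax1 t q r ntq nqr ntr htqr
          have hqrp : ccw q r p := ax1 p q r npq nqr npr hpqr
          have htqs : ccw t q s := ax1 s t q nst ntq nsq hstq
          have hqst : ccw q s t := ax1 t q s ntq nqs nts htqs
          have hpqt : ccw p q t := ax1 t p q ntp npq ntq htpq
          have hqtp : ccw q t p := ax1 p q t npq nqt npt hpqt
          have hqsp : ccw q s p := ax5 s t p r q nst nsp nsr nsq ntp ntr ntq npr npq nrq hqrs hqrt hqrp hqst hqtp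
          have hspq : ccw s p q := ax1 q s p nqs nsp nqp hqsp
          exact ax2 s p q nsp npq nsq hspq hsqp
        · -- hprq
          have hrqp : ccw r q p := ax1 p r q npr nrq npq hprq
          have htqp : ccw t q p := ax4 t q p r ntq ntp ntr nqp nqr npr hrqp htrp htqr
          exact ax2 t q p ntq nqp ntp htqp htpq
      · -- hsrp
        rcases ax3 p q r npq nqr npr with hpqr | hprq
        · -- hpqr
          have hqrs : ccw q r s := ax1 s q r nsq nqr nsr hsqr
          have hqrt : ccw q r t := ax1 t q r ntq nqr ntr htqr
          have hqrp : ccw q r p := ax1 p q r npq nqr npr hpqr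
          have htqs : ccw t q s := ax1 s t q nst ntq nsq hstq
          have hqst : ccw q s t := ax1 t q s ntq nqs nts htqs
          have hpqt : ccw p q t := ax1 t p q ntp npq ntq htpq
          have hqtp : ccw q t p := ax1 p q t npq nqt npt hpqt
          have hqsp : ccw q s p := ax5 s t p r q nst nsp nsr nsq ntp ntr ntq npr npq nrq hqrs hqrt hqrp hqst hqtp
          have hspq : ccw s p q := ax1 q s p nqs nsp nqp hqsp
          exact ax2 s p q nsp npq nsq hspq hsqp
        · -- hprq
          have hrqp : ccw r q p := ax1 p r q npr nrq npq hprq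
          have htqp : ccw t q p := ax4 t q p r ntq ntp ntr nqp nqr npr hrqp htrp htqr
          exact ax2 t q p ntq nqp ntp htqp htpq
    · -- hsrq
      rcases ax3 s p r nsp npr nsr with hspr | hsrp
      · -- hspr
        rcases ax3 p q r npq nqr npr with hpqr | hprq
        · -- hpqr
          have hspq : ccw s p q := ax5 p r q t s npr npq npt nps nrq nrt nrs nqt nqs nts hstp hstr hstq hspr hsrq
          exact ax2 s p q nsp npq nsq hspq hsqp
        · -- hprq
          have hrqp : ccw r q p := ax1 p r q npr nrq npq hprq
          have htqp : ccw t q p := ax4 t q p r ntq ntp ntr nqp nqr npr hrqp htrp htqr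
          exact ax2 t q p ntq nqp ntp htqp htpq
      · -- hsrp
        rcases ax3 p q r npq nqr npr with hpqr | hprq
        · -- hpqr
          have hrps : ccw r p s := ax1 s r p nsr nrp nsp hsrp
          have hrpt : ccw r p t := ax1 t r p ntr nrp ntp htrp
          have hqrp : ccw q r p := ax1 p q r npq nqr npr hpqr
          have hrpq : ccw r p q := ax1 q r p nqr nrp nqp hqrp
          have htrs : ccw t r s := ax1 s t r nst ntr nsr hstr
          have hrst : ccw r s t := ax1 t r s ntr nrs nts htrs
          have hqrt : ccw q r t := ax1 t q r ntq nqr ntr htqr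
          have hrtq : ccw r t q := ax1 q r t nqr nrt nqt hqrt
          have hrsq : ccw r s q := ax5 s t q p r nst nsq nsp nsr ntq ntp ntr nqp nqr npr hrps hrpt hrpq hrst hrtq
          have hsqr : ccw s q r := ax1 r s q nrs nsq nrq hrsq
          exact ax2 s q r nsq nqr nsr hsqr hsrq
        · -- hprq
          have hrqp : ccw r q p := ax1 p r q npr nrq npq hprq
          have htqp : ccw t q p := ax4 t q p r ntq ntp ntr nqp nqr npr hrqp htrp htqr
          exact ax2 t q p ntq nqp ntp htqp htpq

theorem CC.cl_sound {α : Type*} {ccw : α → α → α → Prop} (h : IsCCSystem ccw)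
    (T : Set (α × α × α))
    (hT : ∀ t ∈ T, t.1 ≠ t.2.1 ∧ t.2.1 ≠ t.2.2 ∧ t.1 ≠ t.2.2 ∧ ccw t.1 t.2.1 t.2.2)
    {a b c : α} (hcl : Cl T a b c) : a ≠ b ∧ b ≠ c ∧ a ≠ c ∧ ccw a b c := by
  obtain ⟨ax1, ax2, ax3, ax4, ax5⟩ := h
  induction hcl with
  | base hm => exact hT _ hm
  | ax1 _ ih =>
    obtain ⟨hpq, hqr, hpr, hc⟩ := ih
    exact ⟨hqr, hpr.symm, hpq.symm, ax1 _ _ _ hpq hqr hpr hc⟩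
  | ax4 _ _ _ ih1 ih2 ih3 =>
    obtain ⟨htq, hqr, htr, hc1⟩ := ih1
    obtain ⟨hpt, _, hpr, hc2⟩ := ih2
    obtain ⟨hpq, hqt, _, hc3⟩ := ih3
    exact ⟨hpq, hqr, hpr, ax4 _ _ _ _ hpq hpr hpt hqr hqt htr.symm hc1 hc2 hc3⟩
  | @ax5 p q r s t _ _ _ _ _ ih1 ih2 ih3 ih4 ih5 =>
    obtain ⟨hts, hsp, htp, hc1⟩ := ih1
    obtain ⟨_, hsq, htq, hc2⟩ := ih2
    obtain ⟨_, hsr, htr, hc3⟩ := ih3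
    obtain ⟨_, hpq, _, hc4⟩ := ih4
    obtain ⟨_, hqr, _, hc5⟩ := ih5
    have hpr : p ≠ r := by
      rintro rfl
      exact ax2 _ _ _ htp hpq htq hc4 hc5
    exact ⟨htp, hpr, htr,
      ax5 _ _ _ _ _ hpq hpr hsp.symm htp.symm hqr hsq.symm htq.symm hsr.symm
        htr.symm hts.symm hc1 hc2 hc3 hc4 hc5⟩
  | @ax5' p q r s t _ _ _ _ _ ih1 ih2 ih3 ih4 ih5 =>
    obtain ⟨hst, htp, hsp, hc1⟩ := ih1
    obtain ⟨_, htq, hsq, hc2⟩ := ih2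
    obtain ⟨_, htr, hsr, hc3⟩ := ih3
    obtain ⟨_, hpq, _, hc4⟩ := ih4
    obtain ⟨_, hqr, _, hc5⟩ := ih5
    have hpr : p ≠ r := by
      rintro rfl
      exact ax2 _ _ _ htp hpq htq hc4 hc5
    exact ⟨htp, hpr, htr,
      CC.dual ⟨ax1, ax2, ax3, ax4, ax5⟩ _ _ _ _ _ hpq hpr hsp.symm htp.symm hqr
        hsq.symm htq.symm hsr.symm htr.symm hst hc1 hc2 hc3 hc4 hc5⟩

/-- Each OT-graph determines a unique order type: two CC-systems agreeing on a
set `T` of triples whose derivation closure decides every 3-element set of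
points must agree on all triples of pairwise distinct points. -/
theorem OT_graph_unique_order_type {α : Type*} (ccw₁ ccw₂ : α → α → α → Prop)
    (h1 : IsCCSystem ccw₁) (h2 : IsCCSystem ccw₂) (T : Set (α × α × α))
    (hT : ∀ t ∈ T, t.1 ≠ t.2.1 ∧ t.2.1 ≠ t.2.2 ∧ t.1 ≠ t.2.2 ∧
      ccw₁ t.1 t.2.1 t.2.2 ∧ ccw₂ t.1 t.2.1 t.2.2)
    (hfull : ∀ a b c : α, a ≠ b → b ≠ c → a ≠ c →
      ∃ x y z : α, Cl T x y z ∧ ({x, y, z} : Set α) = {a, b, c}) :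
    ∀ a b c : α, a ≠ b → b ≠ c → a ≠ c → (ccw₁ a b c ↔ ccw₂ a b c) := by
  intro a b c hab hbc hac
  obtain ⟨x, y, z, hcl, heq⟩ := hfull a b c hab hbc hac
  obtain ⟨hxy, hyz, hxz, H1⟩ := CC.cl_sound h1 T (fun t ht => by
    obtain ⟨d1, d2, d3, c1, _⟩ := hT t ht; exact ⟨d1, d2, d3, c1⟩) hcl
  obtain ⟨_, _, _, H2⟩ := CC.cl_sound h2 T (fun t ht => by
    obtain ⟨d1, d2, d3, _, c2⟩ := hT t ht; exact ⟨d1, d2, d3, c2⟩) hcl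
  obtain ⟨ax1₁, ax2₁, ax3₁, -, -⟩ := h1
  obtain ⟨ax1₂, ax2₂, ax3₂, -, -⟩ := h2
  have hx : x = a ∨ x = b ∨ x = c := by
    have : x ∈ ({a, b, c} : Set α) := heq ▸ (by simp : x ∈ ({x, y, z} : Set α))
    simpa using this
  have hy : y = a ∨ y = b ∨ y = c := by
    have : y ∈ ({a, b, c} : Set α) := heq ▸ (by simp : y ∈ ({x, y, z} : Set α))
    simpa using this
  have hz : z = a ∨ z = b ∨ z = c := by
    have : z ∈ ({a, b, c} : Set α) := heq ▸ (by simp : z ∈ ({x, y, z} : Set α))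
    simpa using this
  have key : (ccw₁ a b c ∧ ccw₂ a b c) ∨ (ccw₁ a c b ∧ ccw₂ a c b) := by
    rcases hx with rfl | rfl | rfl <;> rcases hy with rfl | rfl | rfl <;>
      rcases hz with rfl | rfl | rfl <;>
      first
      | exact absurd rfl hxy
      | exact absurd rfl hyz
      | exact absurd rfl hxz
      | exact Or.inl ⟨H1, H2⟩
      | exact Or.inr ⟨H1, H2⟩
      | exact Or.inl ⟨ax1₁ _ _ _ hxy hyz hxz H1, ax1₂ _ _ _ hxy hyz hxz H2⟩
      | exact Or.inr ⟨ax1₁ _ _ _ hxy hyz hxz H1, ax1₂ _ _ _ hxy hyz hxz H2⟩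
      | exact Or.inl ⟨ax1₁ _ _ _ hyz hxz.symm hxy.symm (ax1₁ _ _ _ hxy hyz hxz H1),
          ax1₂ _ _ _ hyz hxz.symm hxy.symm (ax1₂ _ _ _ hxy hyz hxz H2)⟩
      | exact Or.inr ⟨ax1₁ _ _ _ hyz hxz.symm hxy.symm (ax1₁ _ _ _ hxy hyz hxz H1),
          ax1₂ _ _ _ hyz hxz.symm hxy.symm (ax1₂ _ _ _ hxy hyz hxz H2)⟩
  rcases key with ⟨k1, k2⟩ | ⟨k1, k2⟩
  · exact iff_of_true k1 k2
  · exact iff_of_false (ax2₁ a c b hac.symm.symm hbc.symm hab k1)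
      (ax2₂ a c b hac hbc.symm hab k2)
end

section
/- Let S be a finite set of points in ℝ² in general position (no three points of S are collinear), and for p,q,r ∈ ℝ² define ccw p q r to mean det(q − p, r − p) > 0, i.e. (q.1 − p.1)·(r.2 − p.2) − (q.2 − p.2)·(r.1 − p.1) > 0. Then ccw restricted to S is a CC-system: for all pairwise distinct p,q,r ∈ S it satisfies Axiom 1 (ccw p q r → ccw q r p), Axiom 2 (ccw p q r → ¬ ccw p r q), Axiom 3 (ccw p q r ∨ ccw p r q), for all pairwise distinct p,q,r,t ∈ S Axiom 4 (ccw t q r ∧ ccw p t r ∧ ccw p q t → ccw p q r), and for all pairwise distinct p,q,r,s,t ∈ S Axiom 5 (ccw t s p ∧ ccw t s q ∧ ccw t s r ∧ ccw t p q ∧ ccw t q r → ccw t p r). -/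
lemma collinear_of_det_eq_zero {p q r : ℝ × ℝ} (hpq : p ≠ q)
    (h : (q.1 - p.1) * (r.2 - p.2) - (q.2 - p.2) * (r.1 - p.1) = 0) :
    Collinear ℝ ({p, q, r} : Set (ℝ × ℝ)) := by
  rw [collinear_iff_of_mem (Set.mem_insert p _)]
  refine ⟨q - p, ?_⟩
  intro x hx
  have key : (q.1 - p.1) * (x.2 - p.2) - (q.2 - p.2) * (x.1 - p.1) = 0 := by
    rcases hx with rfl | rfl | rfl
    · ring
    · ring
    · exact h
  by_cases h1 : q.1 - p.1 = 0
  · have h2 : q.2 - p.2 ≠ 0 := by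
      intro h2; apply hpq; ext <;> linarith
    have h0 : (q.1 - p.1) * (x.2 - p.2) = 0 := by rw [h1]; ring
    have hx1 : x.1 - p.1 = 0 := by
      rcases mul_eq_zero.mp (show (q.2 - p.2) * (x.1 - p.1) = 0 by linarith) with h' | h'
      · exact absurd h' h2
      · exact h'
    refine ⟨(x.2 - p.2) / (q.2 - p.2), ?_⟩
    have : ((x.2 - p.2) / (q.2 - p.2)) • (q - p) +ᵥ p =
        (((x.2 - p.2) / (q.2 - p.2)) * (q.1 - p.1) + p.1,
         ((x.2 - p.2) / (q.2 - p.2)) * (q.2 - p.2) + p.2) := rfl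
    rw [this]
    ext <;> simp
    · rw [h1]; simp; linarith
    · field_simp; ring
  · refine ⟨(x.1 - p.1) / (q.1 - p.1), ?_⟩
    have : ((x.1 - p.1) / (q.1 - p.1)) • (q - p) +ᵥ p =
        (((x.1 - p.1) / (q.1 - p.1)) * (q.1 - p.1) + p.1,
         ((x.1 - p.1) / (q.1 - p.1)) * (q.2 - p.2) + p.2) := rfl
    rw [this]
    ext <;> simp
    · field_simp; ring
    · field_simp; nlinarith [key]

/-- The counterclockwise orientation predicate in the plane:
`ccwR2 p q r` iff `det (q - p, r - p) > 0`. -/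
def ccwR2 (p q r : ℝ × ℝ) : Prop :=
  0 < (q.1 - p.1) * (r.2 - p.2) - (q.2 - p.2) * (r.1 - p.1)

/-- A finite planar point set in general position (no three points collinear)
induces a CC-system via the counterclockwise predicate. -/
theorem ccw_is_CC_system (S : Set (ℝ × ℝ)) (hfin : S.Finite)
    (hgen : ∀ p ∈ S, ∀ q ∈ S, ∀ r ∈ S, p ≠ q → q ≠ r → p ≠ r →
      ¬ Collinear ℝ ({p, q, r} : Set (ℝ × ℝ))) :
    (∀ p ∈ S, ∀ q ∈ S, ∀ r ∈ S, p ≠ q → q ≠ r → p ≠ r →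
      ccwR2 p q r → ccwR2 q r p) ∧
    (∀ p ∈ S, ∀ q ∈ S, ∀ r ∈ S, p ≠ q → q ≠ r → p ≠ r →
      ccwR2 p q r → ¬ ccwR2 p r q) ∧
    (∀ p ∈ S, ∀ q ∈ S, ∀ r ∈ S, p ≠ q → q ≠ r → p ≠ r →
      (ccwR2 p q r ∨ ccwR2 p r q)) ∧
    (∀ p ∈ S, ∀ q ∈ S, ∀ r ∈ S, ∀ t ∈ S,
      p ≠ q → p ≠ r → p ≠ t → q ≠ r → q ≠ t → r ≠ t →
      ccwR2 t q r → ccwR2 p t r → ccwR2 p q t → ccwR2 p q r) ∧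
    (∀ p ∈ S, ∀ q ∈ S, ∀ r ∈ S, ∀ s ∈ S, ∀ t ∈ S,
      p ≠ q → p ≠ r → p ≠ s → p ≠ t → q ≠ r → q ≠ s → q ≠ t →
      r ≠ s → r ≠ t → s ≠ t →
      ccwR2 t s p → ccwR2 t s q → ccwR2 t s r → ccwR2 t p q → ccwR2 t q r →
      ccwR2 t p r) := by
  refine ⟨?_, ?_, ?_, ?_, ?_⟩
  · intro p _ q _ r _ _ _ _ h
    unfold ccwR2 at *; nlinarith [h]
  · intro p _ q _ r _ _ _ _ h
    unfold ccwR2 at *; intro h'; nlinarith [h, h']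
  · intro p hp q hq r hr hpq hqr hpr
    unfold ccwR2
    rcases lt_trichotomy 0 ((q.1 - p.1) * (r.2 - p.2) - (q.2 - p.2) * (r.1 - p.1)) with h | h | h
    · exact Or.inl h
    · exact absurd (collinear_of_det_eq_zero hpq h.symm) (hgen p hp q hq r hr hpq hqr hpr)
    · right; nlinarith [h]
  · intro p _ q _ r _ t _ _ _ _ _ _ _ h1 h2 h3
    unfold ccwR2 at *
    nlinarith [h1, h2, h3]
  · intro p _ q _ r _ s _ t _ _ _ _ _ _ _ _ _ _ _ h1 h2 h3 h4 h5
    unfold ccwR2 at *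
    have key : ((s.1 - t.1) * (p.2 - t.2) - (s.2 - t.2) * (p.1 - t.1)) *
        ((q.1 - t.1) * (r.2 - t.2) - (q.2 - t.2) * (r.1 - t.1))
      - ((s.1 - t.1) * (q.2 - t.2) - (s.2 - t.2) * (q.1 - t.1)) *
        ((p.1 - t.1) * (r.2 - t.2) - (p.2 - t.2) * (r.1 - t.1))
      + ((s.1 - t.1) * (r.2 - t.2) - (s.2 - t.2) * (r.1 - t.1)) *
        ((p.1 - t.1) * (q.2 - t.2) - (p.2 - t.2) * (q.1 - t.1)) = 0 := by ring
    nlinarith [h1, h2, h3, h4, h5, key, mul_pos h1 h5, mul_pos h3 h4]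
end

section
/- Let n ≥ 3 and let E be a set of unordered pairs of Fin n. If there exists i ∈ Fin n such that neither i nor i+1 (mod n) belongs to any pair of E, then Cl(T_E) does not contain every ordered triple (a,b,c) of pairwise distinct elements of Fin n with cyc(a,b,c). (That is, in an OT-graph for n points in convex position, two cyclically consecutive points cannot both be isolated vertices.) -/
lemma cyc_rot {n : ℕ} {a b c : Fin n} (h : cyc a b c) : cyc b c a := by
  unfold cyc at *; omega

lemma cyc_ax4 {n : ℕ} {p q r t : Fin n} (h1 : cyc t q r) (h2 : cyc p t r)
    (h3 : cyc p q t) : cyc p q r := by unfold cyc at *; omega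

lemma cyc_ax5 {n : ℕ} {p q r s t : Fin n} (h1 : cyc t s p) (h2 : cyc t s q)
    (h3 : cyc t s r) (h4 : cyc t p q) (h5 : cyc t q r) : cyc t p r := by
  unfold cyc at *; omega

lemma cyc_ax5' {n : ℕ} {p q r s t : Fin n} (h1 : cyc s t p) (h2 : cyc s t q)
    (h3 : cyc s t r) (h4 : cyc t p q) (h5 : cyc t q r) : cyc t p r := by
  unfold cyc at *; omega

/-- In an OT-graph for `n ≥ 3` points in convex position, two cyclically
consecutive points cannot both be isolated: if some `i` and `i + 1 (mod n)`
belong to no edge of `E`, then `Cl (T_E)` misses some counterclockwise triple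
of pairwise distinct points. -/
theorem consecutive_isolated_not_OT_graph (n : ℕ) (hn : 3 ≤ n)
    (E : Finset (Sym2 (Fin n)))
    (h : ∃ i : Fin n, ∀ e ∈ E, i ∉ e ∧ next i ∉ e) :
    ¬ (∀ a b c : Fin n, a ≠ b → b ≠ c → a ≠ c → cyc a b c →
        Cl (TE E) a b c) := by
  intro hall
  obtain ⟨i, hiso⟩ := h
  set j := next i with hjdef
  have hin : i.val < n := i.isLt
  have hjv : (j.val = i.val + 1 ∧ i.val + 1 < n) ∨ (j.val = 0 ∧ i.val + 1 = n) := by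
    have h0 : j.val = (i.val + 1) % n := rfl
    rcases Nat.lt_or_ge (i.val + 1) n with hlt | hge
    · left; rw [h0, Nat.mod_eq_of_lt hlt]; exact ⟨rfl, hlt⟩
    · right
      have he : i.val + 1 = n := by omega
      rw [h0, he, Nat.mod_self]; exact ⟨rfl, rfl⟩
  have hij : i ≠ j := by
    rw [Fin.ne_iff_vne]; omega
  set σ := Equiv.swap i j with hσ
  have hfree : ∀ x : Fin n, x ≠ i → x ≠ j → σ x = x := fun x h1 h2 =>
    Equiv.swap_apply_of_ne_of_ne h1 h2
  have hswap : ∀ a b : Fin n, a ≠ i → a ≠ j → b ≠ i → b ≠ j →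
      (cyc i a b ↔ cyc j a b) := by
    intro a b ha1 ha2 hb1 hb2
    rw [Fin.ne_iff_vne] at ha1 ha2 hb1 hb2
    have hav := a.isLt; have hbv := b.isLt
    unfold cyc; omega
  have hone : ∀ a b c : Fin n, a ≠ i → a ≠ j → b ≠ i → b ≠ j →
      cyc c a b → cyc (σ c) a b := by
    intro a b c ha1 ha2 hb1 hb2 hc
    by_cases h1 : c = i
    · subst h1; rw [hσ, Equiv.swap_apply_left]
      exact (hswap a b ha1 ha2 hb1 hb2).mp hc
    by_cases h2 : c = j
    · subst h2; rw [hσ, Equiv.swap_apply_right]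
      exact (hswap a b ha1 ha2 hb1 hb2).mpr hc
    · rw [hfree c h1 h2]; exact hc
  have hP : ∀ a b c : Fin n, Cl (TE E) a b c → cyc (σ a) (σ b) (σ c) := by
    intro a b c hcl
    induction hcl with
    | @base p q r hmem =>
      obtain ⟨hpq, hqr, hpr, hcyc, hedge⟩ := hmem
      rcases hedge with he | he | he
      · obtain ⟨h1, h2⟩ := hiso _ he
        rw [Sym2.mem_iff] at h1 h2
        push_neg at h1 h2
        have hp1 : p ≠ i := fun hh => h1.1 hh.symm
        have hq1 : q ≠ i := fun hh => h1.2 hh.symm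
        have hp2 : p ≠ j := fun hh => h2.1 hh.symm
        have hq2 : q ≠ j := fun hh => h2.2 hh.symm
        rw [hfree p hp1 hp2, hfree q hq1 hq2]
        have hcyc' : cyc p q r := hcyc
        have := hone p q r hp1 hp2 hq1 hq2 (cyc_rot (cyc_rot hcyc'))
        exact cyc_rot this
      · obtain ⟨h1, h2⟩ := hiso _ he
        rw [Sym2.mem_iff] at h1 h2
        push_neg at h1 h2
        have hq1 : q ≠ i := fun hh => h1.1 hh.symm
        have hr1 : r ≠ i := fun hh => h1.2 hh.symm
        have hq2 : q ≠ j := fun hh => h2.1 hh.symm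
        have hr2 : r ≠ j := fun hh => h2.2 hh.symm
        rw [hfree q hq1 hq2, hfree r hr1 hr2]
        have hcyc' : cyc p q r := hcyc
        exact hone q r p hq1 hq2 hr1 hr2 hcyc'
      · obtain ⟨h1, h2⟩ := hiso _ he
        rw [Sym2.mem_iff] at h1 h2
        push_neg at h1 h2
        have hp1 : p ≠ i := fun hh => h1.1 hh.symm
        have hr1 : r ≠ i := fun hh => h1.2 hh.symm
        have hp2 : p ≠ j := fun hh => h2.1 hh.symm
        have hr2 : r ≠ j := fun hh => h2.2 hh.symm
        rw [hfree p hp1 hp2, hfree r hr1 hr2]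
        have hcyc' : cyc p q r := hcyc
        have := hone r p q hr1 hr2 hp1 hp2 (cyc_rot hcyc')
        exact cyc_rot (cyc_rot this)
    | ax1 _ ih => exact cyc_rot ih
    | ax4 _ _ _ ih1 ih2 ih3 => exact cyc_ax4 ih1 ih2 ih3
    | ax5 _ _ _ _ _ ih1 ih2 ih3 ih4 ih5 => exact cyc_ax5 ih1 ih2 ih3 ih4 ih5
    | ax5' _ _ _ _ _ ih1 ih2 ih3 ih4 ih5 => exact cyc_ax5' ih1 ih2 ih3 ih4 ih5
  -- choose a third point k
  set k : Fin n := ⟨(i.val + 2) % n, Nat.mod_lt _ (by omega)⟩ with hkdef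
  have hkv : (k.val = i.val + 2 ∧ i.val + 2 < n) ∨ (k.val = 0 ∧ i.val + 2 = n) ∨
      (k.val = 1 ∧ i.val + 1 = n) := by
    have hk0 : k.val = (i.val + 2) % n := rfl
    rcases Nat.lt_or_ge (i.val + 2) n with hlt | hge
    · left; rw [hk0, Nat.mod_eq_of_lt hlt]; exact ⟨rfl, hlt⟩
    rcases Nat.lt_or_ge (i.val + 2) (n + 1) with hlt2 | hge2
    · right; left
      have he : i.val + 2 = n := by omega
      rw [hk0, he, Nat.mod_self]; exact ⟨rfl, rfl⟩
    · right; right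
      have he : i.val + 1 = n := by omega
      have h1 : k.val = (n + 1) % n := by rw [hk0]; congr 1; omega
      have h2 : (n + 1) % n = 1 % n := by
        conv_lhs => rw [Nat.add_comm, Nat.add_mod_right]
      rw [h1, h2, Nat.mod_eq_of_lt (by omega)]
      exact ⟨rfl, he⟩
  have hik : i ≠ k := by rw [Fin.ne_iff_vne]; omega
  have hjk : j ≠ k := by rw [Fin.ne_iff_vne]; omega
  have hcycijk : cyc i j k := by unfold cyc; omega
  have hcl := hall i j k hij hjk hik hcycijk
  have := hP i j k hcl
  rw [hσ, Equiv.swap_apply_left, Equiv.swap_apply_right,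
    Equiv.swap_apply_of_ne_of_ne hik.symm hjk.symm] at this
  revert this
  unfold cyc
  omega
end
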